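/- arXiv:1307.5944 — 2 statements merged into one kernel-verified Lean document; each statement's English description precedes it below -/
import Mathlib

section
/- One step of Dynamic Mirror Descent satisfies the per-round bound: ℓ_t(θ̂_t) − ℓ_t(θ_t) ≤ (1/η_t)[D(θ_t‖θ̂_t) − D(θ_{t+1}‖θ̂_{t+1})] + Δ_Φ/η_t + (2M/η_t)‖θ_{t+1} − Φ_t(θ_t)‖ + (η_t/(2σ))G². -/
/-!
The minimality of `θ̃ₜ₊₁` gives the first-order condition, which the three-point identity of the
Bregman divergence turns into
`η (⟨∇f(θ̂ₜ), θ̃ₜ₊₁ - θₜ⟩ + r(θ̃ₜ₊₁) - r(θₜ)) ≤ D(θₜ‖θ̂ₜ) - D(θₜ‖θ̃ₜ₊₁) - D(θ̃ₜ₊₁‖θ̂ₜ)`.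
Convexity of `f` and `r` bounds the regret `ℓₜ(θ̂ₜ) - ℓₜ(θₜ)` by this plus `G ‖θ̂ₜ - θ̃ₜ₊₁‖`, and
strong convexity absorbs that term into `-D(θ̃ₜ₊₁‖θ̂ₜ)` at the price `η G² / (2σ)`. Finally
`D(θₜ‖θ̃ₜ₊₁)` is compared with `D(θₜ₊₁‖θ̂ₜ₊₁)` by applying `Φₜ` (cost `Δ`) and then moving the first
argument from `Φₜ(θₜ)` to `θₜ₊₁` (cost `2M ‖θₜ₊₁ - Φₜ(θₜ)‖`, as `ψ` is `M`-Lipschitz).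
-/

open scoped RealInnerProductSpace
open InnerProductSpace

section FirstOrder

variable {E : Type*} [NormedAddCommGroup E] [InnerProductSpace ℝ E] [CompleteSpace E]
  {S : Set E} {φ : E → ℝ} {g x y : E}

theorem ConvexOn.add_inner_gradient_le (hφ : ConvexOn ℝ S φ) (hx : x ∈ S) (hy : y ∈ S)
    (hg : HasGradientAt φ g x) : φ x + ⟪g, y - x⟫ ≤ φ y := by
  let ℓ : ℝ →ᵃ[ℝ] E := AffineMap.lineMap x y
  have hderiv : HasDerivAt (φ ∘ ℓ) ⟪g, y - x⟫ 0 := by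
    have hg' : HasFDerivAt φ (toDual ℝ E g) (ℓ 0) := by simpa [ℓ] using hg.hasFDerivAt
    simpa [ℓ] using hg'.comp_hasDerivAt (0 : ℝ) AffineMap.hasDerivAt_lineMap
  have := (hφ.comp_affineMap ℓ).le_slope_of_hasDerivAt (x := 0) (y := 1)
    (by simpa [ℓ] using hx) (by simpa [ℓ] using hy) zero_lt_one hderiv
  simp only [slope_def_field, Function.comp_apply, ℓ, AffineMap.lineMap_apply_zero,
    AffineMap.lineMap_apply_one, sub_zero, div_one] at this
  linarith

end FirstOrder

theorem IsMinOn.fderiv_sub_nonneg {E : Type*} [NormedAddCommGroup E] [NormedSpace ℝ E]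
    {S : Set E} {F : E → ℝ} {F' : E →L[ℝ] ℝ} {x y : E} (hS : Convex ℝ S) (hx : x ∈ S)
    (hy : y ∈ S) (hmin : IsMinOn F S x) (hF : HasFDerivAt F F' x) : 0 ≤ F' (y - x) :=
  hmin.localize.hasFDerivWithinAt_nonneg hF.hasFDerivWithinAt
    (sub_mem_posTangentConeAt_of_segment_subset (hS.segment_subset hx hy))

theorem mul_le_half_mul_sq_add_sq_div {σ : ℝ} (hσ : 0 < σ) (a b : ℝ) :
    a * b ≤ σ / 2 * b ^ 2 + a ^ 2 / (2 * σ) := by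
  have hsq : σ / 2 * b ^ 2 + a ^ 2 / (2 * σ) - a * b = (σ * b - a) ^ 2 / (2 * σ) := by
    field_simp; ring
  linarith [hsq, div_nonneg (sq_nonneg (σ * b - a)) (by positivity : (0 : ℝ) ≤ 2 * σ)]

section Bregman

variable {E : Type*} [NormedAddCommGroup E] [InnerProductSpace ℝ E] [CompleteSpace E]

noncomputable def bregmanDiv (ψ : E → ℝ) (a b : E) : ℝ :=
  ψ a - ψ b - ⟪gradient ψ b, a - b⟫

theorem bregmanDiv_three_point (ψ : E → ℝ) (a b c : E) :
    bregmanDiv ψ c a - bregmanDiv ψ c b - bregmanDiv ψ b a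
      = ⟪gradient ψ b - gradient ψ a, c - b⟫ := by
  simp only [bregmanDiv, inner_sub_left, inner_sub_right]
  ring

variable {ψ : E → ℝ}

theorem bregmanDiv_sub_bregmanDiv_le {x y : E} (z : E) (h : 0 ≤ bregmanDiv ψ x y) :
    bregmanDiv ψ y z - bregmanDiv ψ x z ≤ (‖gradient ψ y‖ + ‖gradient ψ z‖) * ‖y - x‖ := by
  have hCS : ⟪gradient ψ y - gradient ψ z, y - x⟫ ≤ (‖gradient ψ y‖ + ‖gradient ψ z‖) * ‖y - x‖ :=
    (real_inner_le_norm _ _).trans <|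
      mul_le_mul_of_nonneg_right (norm_sub_le _ _) (norm_nonneg _)
  simp only [bregmanDiv, inner_sub_left, inner_sub_right] at h hCS ⊢
  linarith

theorem IsMinOn.mul_inner_add_sub_le_bregmanDiv {S : Set E} {r : E → ℝ} {c x x' y : E} {η : ℝ}
    (hS : Convex ℝ S) (hrc : ConvexOn ℝ S r) (hη : 0 ≤ η) (hx' : x' ∈ S) (hy : y ∈ S)
    (hr : DifferentiableAt ℝ r x') (hψ : DifferentiableAt ℝ ψ x')
    (hmin : IsMinOn (fun θ => η * ⟪c, θ⟫ + η * r θ + bregmanDiv ψ θ x) S x') :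
    η * (⟪c, x' - y⟫ + r x' - r y)
      ≤ bregmanDiv ψ y x - bregmanDiv ψ y x' - bregmanDiv ψ x' x := by
  have hF : HasFDerivAt (fun θ => η * ⟪c, θ⟫ + η * r θ + bregmanDiv ψ θ x)
      (η • toDual ℝ E c + η • toDual ℝ E (gradient r x')
        + (toDual ℝ E (gradient ψ x') - toDual ℝ E (gradient ψ x))) x' := by
    have hlin : ∀ v : E, HasFDerivAt (fun θ => ⟪v, θ⟫) (toDual ℝ E v) x' :=
      fun v => (toDual ℝ E v).hasFDerivAt
    refine ((hlin c).const_mul η).add (hr.hasGradientAt.hasFDerivAt.const_mul η)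
      |>.add ?_
    simp only [bregmanDiv, inner_sub_right]
    exact (hψ.hasGradientAt.hasFDerivAt.sub_const _).sub ((hlin _).sub_const _)
  have hopt := hmin.fderiv_sub_nonneg hS hx' hy hF
  have hconv := mul_le_mul_of_nonneg_left (hrc.add_inner_gradient_le hx' hy hr.hasGradientAt) hη
  have hthree := bregmanDiv_three_point ψ x x' y
  simp only [_root_.add_apply, _root_.sub_apply, _root_.smul_apply, toDual_apply_apply,
    smul_eq_mul, inner_sub_left, inner_sub_right] at hopt hthree hconv ⊢
  linarith

end Bregman

theorem dmd_per_round_bound_general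
    {d : ℕ} (Θ : Set (EuclideanSpace ℝ (Fin d))) (hΘ : Convex ℝ Θ)
    (f r ψ : EuclideanSpace ℝ (Fin d) → ℝ)
    (hf : Differentiable ℝ f) (hr : Differentiable ℝ r) (hψ : Differentiable ℝ ψ)
    (hfc : ConvexOn ℝ Θ f) (hrc : ConvexOn ℝ Θ r)
    (σ M G Δ η : ℝ) (hσ : 0 < σ) (hη : 0 < η)
    -- σ-strong convexity of ψ
    (hstrong : ∀ θ₁ ∈ Θ, ∀ θ₂ ∈ Θ,
      ψ θ₁ ≥ ψ θ₂ + ⟪gradient ψ θ₂, θ₁ - θ₂⟫ + σ / 2 * ‖θ₁ - θ₂‖ ^ 2)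
    -- gradient bounds (dual norm = Euclidean norm here)
    (hM : ∀ θ ∈ Θ, ‖gradient ψ θ‖ ≤ M)
    (hG : ∀ θ ∈ Θ, ‖gradient f θ + gradient r θ‖ ≤ G)
    -- Bregman divergence of ψ
    (D : EuclideanSpace ℝ (Fin d) → EuclideanSpace ℝ (Fin d) → ℝ)
    (hD : ∀ a b, D a b = ψ a - ψ b - ⟪gradient ψ b, a - b⟫)
    -- the dynamical model and its distortion factor
    (Φ : EuclideanSpace ℝ (Fin d) → EuclideanSpace ℝ (Fin d))
    (hΦ : Set.MapsTo Φ Θ Θ)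
    (hΔ : ∀ θ₁ ∈ Θ, ∀ θ₂ ∈ Θ, D (Φ θ₁) (Φ θ₂) - D θ₁ θ₂ ≤ Δ)
    -- the DMD update
    (θhat θtilNext θhatNext : EuclideanSpace ℝ (Fin d))
    (hθhat : θhat ∈ Θ) (hθtil : θtilNext ∈ Θ)
    (hmin : IsMinOn (fun θ => η * ⟪gradient f θhat, θ⟫ + η * r θ + D θ θhat) Θ θtilNext)
    (hnext : θhatNext = Φ θtilNext)
    -- the comparator points
    (θt θtNext : EuclideanSpace ℝ (Fin d)) (hθt : θt ∈ Θ) (hθtNext : θtNext ∈ Θ) :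
    (f θhat + r θhat) - (f θt + r θt) ≤
      (1 / η) * (D θt θhat - D θtNext θhatNext) + Δ / η
        + (2 * M / η) * ‖θtNext - Φ θt‖ + (η / (2 * σ)) * G ^ 2 := by
  obtain rfl : D = bregmanDiv ψ := funext₂ hD
  subst hnext
  have hstrong' : ∀ a ∈ Θ, ∀ b ∈ Θ, σ / 2 * ‖a - b‖ ^ 2 ≤ bregmanDiv ψ a b := fun a ha b hb => by
    unfold bregmanDiv; linarith [hstrong a ha b hb]
  have hstep := hmin.mul_inner_add_sub_le_bregmanDiv hΘ hrc hη.le hθtil hθt (hr _) (hψ _)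
  have hf_lin := hfc.add_inner_gradient_le hθhat hθt (hf θhat).hasGradientAt
  have hr_lin := hrc.add_inner_gradient_le hθhat hθtil (hr θhat).hasGradientAt
  have hCS : ⟪gradient f θhat + gradient r θhat, θhat - θtilNext⟫ ≤ G * ‖θhat - θtilNext‖ :=
    (real_inner_le_norm _ _).trans (mul_le_mul_of_nonneg_right (hG θhat hθhat) (norm_nonneg _))
  have hyoung := mul_le_half_mul_sq_add_sq_div hσ (η * G) ‖θhat - θtilNext‖
  have hclose := hstrong' θtilNext hθtil θhat hθhat
  rw [norm_sub_rev] at hclose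
  have hshift := bregmanDiv_sub_bregmanDiv_le (Φ θtilNext)
    ((mul_nonneg (by positivity) (sq_nonneg _)).trans (hstrong' _ (hΦ hθt) _ hθtNext))
  have hgrad : (‖gradient ψ θtNext‖ + ‖gradient ψ (Φ θtilNext)‖) * ‖θtNext - Φ θt‖
      ≤ 2 * M * ‖θtNext - Φ θt‖ :=
    mul_le_mul_of_nonneg_right (by linarith [hM _ hθtNext, hM _ (hΦ hθtil)]) (norm_nonneg _)
  have hdist := hΔ θt hθt θtilNext hθtil
  have hscaled : η * ((f θhat + r θhat) - (f θt + r θt))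
      ≤ bregmanDiv ψ θt θhat - bregmanDiv ψ θtNext (Φ θtilNext) + Δ
        + 2 * M * ‖θtNext - Φ θt‖ + (η * G) ^ 2 / (2 * σ) := by
    have hf_lin := mul_le_mul_of_nonneg_left hf_lin hη.le
    have hr_lin := mul_le_mul_of_nonneg_left hr_lin hη.le
    have hCS := mul_le_mul_of_nonneg_left hCS hη.le
    simp only [inner_add_left, inner_sub_right, mul_add, mul_sub] at hf_lin hr_lin hCS hstep ⊢
    linarith
  refine le_of_mul_le_mul_left (hscaled.trans_eq ?_) hη
  field_simp

/-- per-round bound for one step of Dynamic Mirror Descent (Lemma 1). -/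
theorem dmd_per_round_bound
    {d : ℕ} (Θ : Set (EuclideanSpace ℝ (Fin d))) (hΘc : IsClosed Θ) (hΘ : Convex ℝ Θ)
    (f r ψ : EuclideanSpace ℝ (Fin d) → ℝ)
    (hf : Differentiable ℝ f) (hr : Differentiable ℝ r) (hψ : Differentiable ℝ ψ)
    (hfc : ConvexOn ℝ Θ f) (hrc : ConvexOn ℝ Θ r)
    (σ M G Δ η : ℝ) (hσ : 0 < σ) (hη : 0 < η)
    -- σ-strong convexity of ψ
    (hstrong : ∀ θ₁ ∈ Θ, ∀ θ₂ ∈ Θ,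
      ψ θ₁ ≥ ψ θ₂ + ⟪gradient ψ θ₂, θ₁ - θ₂⟫ + σ / 2 * ‖θ₁ - θ₂‖ ^ 2)
    -- gradient bounds (dual norm = Euclidean norm here)
    (hM : ∀ θ ∈ Θ, ‖gradient ψ θ‖ ≤ M)
    (hG : ∀ θ ∈ Θ, ‖gradient f θ + gradient r θ‖ ≤ G)
    -- Bregman divergence of ψ
    (D : EuclideanSpace ℝ (Fin d) → EuclideanSpace ℝ (Fin d) → ℝ)
    (hD : ∀ a b, D a b = ψ a - ψ b - ⟪gradient ψ b, a - b⟫)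
    -- the dynamical model and its distortion factor
    (Φ : EuclideanSpace ℝ (Fin d) → EuclideanSpace ℝ (Fin d))
    (hΦ : Set.MapsTo Φ Θ Θ)
    (hΔ : ∀ θ₁ ∈ Θ, ∀ θ₂ ∈ Θ, D (Φ θ₁) (Φ θ₂) - D θ₁ θ₂ ≤ Δ)
    -- the DMD update
    (θhat θtilNext θhatNext : EuclideanSpace ℝ (Fin d))
    (hθhat : θhat ∈ Θ) (hθtil : θtilNext ∈ Θ)
    (hmin : IsMinOn (fun θ => η * ⟪gradient f θhat, θ⟫ + η * r θ + D θ θhat) Θ θtilNext)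
    (hnext : θhatNext = Φ θtilNext)
    -- the comparator points
    (θt θtNext : EuclideanSpace ℝ (Fin d)) (hθt : θt ∈ Θ) (hθtNext : θtNext ∈ Θ) :
    (f θhat + r θhat) - (f θt + r θt) ≤
      (1 / η) * (D θt θhat - D θtNext θhatNext) + Δ / η
        + (2 * M / η) * ‖θtNext - Φ θt‖ + (η / (2 * σ)) * G ^ 2 :=
  dmd_per_round_bound_general Θ hΘ f r ψ hf hr hψ hfc hrc σ M G Δ η hσ hη hstrong hM hG D hD Φ hΦ hΔ
    θhat θtilNext θhatNext hθhat hθtil hmin hnext θt θtNext hθt hθtNext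
end

section
/- Zinkevich's online gradient descent bound: let 𝒜 ⊂ ℝ^n be a closed convex set of diameter at most R, let g_t: 𝒜 → ℝ be convex with ‖∇g_t(α)‖₂ ≤ G for all α ∈ 𝒜, and define α̂_{t+1} = proj_𝒜(α̂_t − ρ_t ∇g_t(α̂_t)) with ρ_t = ρ/√t for ρ > 0. Then for any fixed α ∈ 𝒜, Σ_{t=1}^T [g_t(α̂_t) − g_t(α)] ≤ R²√T/(2ρ) + ρG²(2√T − 1)/2... in particular the regret is at most C√T for a constant C depending only on R, G, ρ. -/
/-! Each round of projected gradient descent with step `η` satisfies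
`g x - g α ≤ ⟪∇g x, x - α⟫ ≤ (‖x - α‖² - ‖x' - α‖²) / (2η) + η ‖∇g x‖² / 2`:
the first inequality is the gradient inequality of a convex function, the second expands the
square and uses that projecting onto a convex set moves a point closer to every point of the set.
With `η_t = ρ / √t`, summation by parts bounds the first terms by `R² √T / (2ρ)`, because the
weights `√t` increase and all squared distances are at most `R²`; the second terms sum to at most
`ρ G² (2√T - 1) / 2` because `1 / √(t + 1) ≤ 2 (√(t + 1) - √t)`. -/

open Finset RealInnerProductSpace

theorem ConvexOn.le_sub_of_hasFDerivAt {E : Type*} [NormedAddCommGroup E] [NormedSpace ℝ E]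
    {s : Set E} {f : E → ℝ} {f' : E →L[ℝ] ℝ} {x y : E} (hf : ConvexOn ℝ s f)
    (hx : x ∈ s) (hy : y ∈ s) (hd : HasFDerivAt f f' x) : f' (y - x) ≤ f y - f x := by
  let c : ℝ →ᵃ[ℝ] E := AffineMap.lineMap x y
  have hd0 : HasFDerivAt f f' (c 0) := by simpa [c] using hd
  have hline : HasDerivAt (f ∘ c) (f' (y - x)) 0 :=
    hd0.comp_hasDerivAt 0 AffineMap.hasDerivAt_lineMap
  have h0 : (0 : ℝ) ∈ c ⁻¹' s := by simpa [c] using hx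
  have h1 : (1 : ℝ) ∈ c ⁻¹' s := by simpa [c] using hy
  simpa [slope_def_field, c] using (hf.comp_affineMap c).le_slope_of_hasDerivAt h0 h1 one_pos hline

theorem ConvexOn.inner_gradient_le_sub {E : Type*} [NormedAddCommGroup E] [InnerProductSpace ℝ E]
    [CompleteSpace E] {s : Set E} {f : E → ℝ} {x y : E} (hf : ConvexOn ℝ s f)
    (hx : x ∈ s) (hy : y ∈ s) (hd : DifferentiableAt ℝ f x) :
    ⟪gradient f x, y - x⟫ ≤ f y - f x := by
  simpa using hf.le_sub_of_hasFDerivAt hx hy hd.hasGradientAt.hasFDerivAt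

theorem Convex.norm_sub_le_of_forall_norm_sub_le {F : Type*} [NormedAddCommGroup F]
    [InnerProductSpace ℝ F] {K : Set F} (hK : Convex ℝ K) {y m α : F} (hm : m ∈ K) (hα : α ∈ K)
    (hmin : ∀ a ∈ K, ‖m - y‖ ≤ ‖a - y‖) : ‖m - α‖ ≤ ‖y - α‖ := by
  have : Nonempty K := ⟨⟨m, hm⟩⟩
  have hinf : ‖y - m‖ = ⨅ a : K, ‖y - a‖ :=
    le_antisymm (le_ciInf fun a => by simpa [norm_sub_rev] using hmin a a.2)
      (ciInf_le ⟨0, Set.forall_mem_range.2 fun _ => norm_nonneg _⟩ (⟨m, hm⟩ : K))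
  have hobtuse : ⟪y - m, α - m⟫ ≤ 0 := (norm_eq_iInf_iff_real_inner_le_zero hK hm).1 hinf α hα
  have hsplit : ‖y - α‖ ^ 2 = ‖y - m‖ ^ 2 - 2 * ⟪y - m, α - m⟫ + ‖m - α‖ ^ 2 := by
    rw [← norm_sub_rev α m, ← norm_sub_sq_real]; congr 2; abel
  exact (sq_le_sq₀ (norm_nonneg _) (norm_nonneg _)).1 (by linarith [sq_nonneg ‖y - m‖])

theorem norm_sub_smul_sub_sq {F : Type*} [NormedAddCommGroup F] [InnerProductSpace ℝ F]
    (x v α : F) (η : ℝ) :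
    ‖x - η • v - α‖ ^ 2 = ‖x - α‖ ^ 2 - 2 * η * ⟪v, x - α⟫ + η ^ 2 * ‖v‖ ^ 2 := by
  rw [sub_right_comm, norm_sub_sq_real, real_inner_smul_right, norm_smul, real_inner_comm,
    Real.norm_eq_abs, mul_pow, sq_abs]
  ring

theorem ConvexOn.sub_le_of_projected_gradient_step {E : Type*} [NormedAddCommGroup E]
    [InnerProductSpace ℝ E] [CompleteSpace E] {s : Set E} {f : E → ℝ} {x x' α : E} {η : ℝ}
    (hf : ConvexOn ℝ s f) (hs : Convex ℝ s) (hx : x ∈ s) (hα : α ∈ s)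
    (hd : DifferentiableAt ℝ f x) (hη : 0 < η) (hx' : x' ∈ s)
    (hmin : ∀ a ∈ s, ‖x' - (x - η • gradient f x)‖ ≤ ‖a - (x - η • gradient f x)‖) :
    f x - f α ≤ (‖x - α‖ ^ 2 - ‖x' - α‖ ^ 2) / (2 * η) + η / 2 * ‖gradient f x‖ ^ 2 := by
  have hgrad : f x - f α ≤ ⟪gradient f x, x - α⟫ := by
    have := hf.inner_gradient_le_sub hx hα hd
    rw [← neg_sub x α, inner_neg_right] at this
    linarith
  have hproj := hs.norm_sub_le_of_forall_norm_sub_le hx' hα hmin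
  calc f x - f α ≤ ⟪gradient f x, x - α⟫ := hgrad
    _ = (‖x - α‖ ^ 2 - ‖x - η • gradient f x - α‖ ^ 2) / (2 * η)
          + η / 2 * ‖gradient f x‖ ^ 2 := by
      rw [norm_sub_smul_sub_sq]; field_simp; ring
    _ ≤ _ := by gcongr

theorem sum_Icc_mul_sub_succ_le {w d : ℕ → ℝ} {D : ℝ} (hw : Monotone w) (hw1 : 0 ≤ w 1)
    (hd : ∀ t, 1 ≤ t → d t ≤ D) {T : ℕ} (hT : 1 ≤ T) :
    ∑ t ∈ Icc 1 T, w t * (d t - d (t + 1)) ≤ w T * (D - d (T + 1)) := by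
  induction T, hT using Nat.le_induction with
  | base =>
    have := mul_le_mul_of_nonneg_left (hd 1 le_rfl) hw1
    simp only [Icc_self, sum_singleton]
    linarith
  | succ T hT ih =>
    rw [sum_Icc_succ_top (by omega)]
    have := mul_le_mul_of_nonneg_right (hd (T + 1) (by omega)) (sub_nonneg.2 (hw T.le_succ))
    linarith

theorem one_div_sqrt_add_one_le {x : ℝ} (hx : 0 ≤ x) :
    1 / √(x + 1) ≤ 2 * (√(x + 1) - √x) := by
  have hpos : 0 < √(x + 1) := Real.sqrt_pos.2 (by linarith)
  rw [div_le_iff₀ hpos]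
  nlinarith [sq_nonneg (√(x + 1) - √x), Real.sq_sqrt hx, Real.sq_sqrt (by linarith : 0 ≤ x + 1)]

theorem sum_Icc_one_div_sqrt_le {T : ℕ} (hT : 1 ≤ T) :
    ∑ t ∈ Icc 1 T, 1 / √(t : ℝ) ≤ 2 * √(T : ℝ) - 1 := by
  induction T, hT using Nat.le_induction with
  | base => norm_num
  | succ T hT ih =>
    rw [sum_Icc_succ_top (by omega)]
    have := one_div_sqrt_add_one_le (Nat.cast_nonneg T)
    push_cast
    linarith

theorem sum_le_of_le_sqrt_stepsize {r d : ℕ → ℝ} {D K ρ : ℝ} (hρ : 0 < ρ) (hK : 0 ≤ K)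
    (hd0 : ∀ t, 0 ≤ d t) (hdD : ∀ t, 1 ≤ t → d t ≤ D)
    (hr : ∀ t, 1 ≤ t → r t ≤ (d t - d (t + 1)) / (2 * (ρ / √(t : ℝ))) + ρ / √(t : ℝ) / 2 * K)
    {T : ℕ} (hT : 1 ≤ T) :
    ∑ t ∈ Icc 1 T, r t ≤ D * √(T : ℝ) / (2 * ρ) + ρ * K * (2 * √(T : ℝ) - 1) / 2 := by
  have hr' : ∀ t ∈ Icc 1 T,
      r t ≤ √(t : ℝ) * (d t - d (t + 1)) / (2 * ρ) + ρ * K / 2 * (1 / √(t : ℝ)) := by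
    intro t ht
    have hsqrt : 0 < √(t : ℝ) := Real.sqrt_pos.2 (by exact_mod_cast (mem_Icc.1 ht).1)
    exact (hr t (mem_Icc.1 ht).1).trans_eq (by field_simp)
  calc ∑ t ∈ Icc 1 T, r t
      ≤ (∑ t ∈ Icc 1 T, √(t : ℝ) * (d t - d (t + 1))) / (2 * ρ)
          + ρ * K / 2 * ∑ t ∈ Icc 1 T, 1 / √(t : ℝ) := by
        rw [sum_div, mul_sum, ← sum_add_distrib]
        exact sum_le_sum hr'
    _ ≤ √(T : ℝ) * (D - d (T + 1)) / (2 * ρ) + ρ * K / 2 * (2 * √(T : ℝ) - 1) := by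
        gcongr
        · exact sum_Icc_mul_sub_succ_le (fun _ _ h => Real.sqrt_le_sqrt (Nat.cast_le.2 h))
            (by positivity) hdD hT
        · exact sum_Icc_one_div_sqrt_le hT
    _ = D * √(T : ℝ) / (2 * ρ) + ρ * K * (2 * √(T : ℝ) - 1) / 2
          - √(T : ℝ) * d (T + 1) / (2 * ρ) := by ring
    _ ≤ D * √(T : ℝ) / (2 * ρ) + ρ * K * (2 * √(T : ℝ) - 1) / 2 :=
        sub_le_self _ (by have := hd0 (T + 1); positivity)

theorem zinkevich_ogd_general
    {n : ℕ} (𝒜 : Set (EuclideanSpace ℝ (Fin n))) (h𝒜 : Convex ℝ 𝒜)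
    (R G ρ : ℝ) (hρ : 0 < ρ)
    (hdiam : ∀ a ∈ 𝒜, ∀ b ∈ 𝒜, ‖a - b‖ ≤ R)
    (g : ℕ → EuclideanSpace ℝ (Fin n) → ℝ)
    (hgd : ∀ t, Differentiable ℝ (g t))
    (hgc : ∀ t, ConvexOn ℝ 𝒜 (g t))
    (hgG : ∀ t, ∀ a ∈ 𝒜, ‖gradient (g t) a‖ ≤ G)
    (ρt : ℕ → ℝ) (hρt : ∀ t : ℕ, ρt t = ρ / Real.sqrt t)
    (αhat : ℕ → EuclideanSpace ℝ (Fin n)) (hα1 : αhat 1 ∈ 𝒜)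
    -- αhat (t+1) is the Euclidean projection of the gradient step onto 𝒜
    (hproj : ∀ t : ℕ, 1 ≤ t → αhat (t + 1) ∈ 𝒜 ∧ ∀ a ∈ 𝒜,
      ‖αhat (t + 1) - (αhat t - ρt t • gradient (g t) (αhat t))‖ ≤
        ‖a - (αhat t - ρt t • gradient (g t) (αhat t))‖)
    (T : ℕ) (hT : 1 ≤ T) :
    ∀ α ∈ 𝒜, ∑ t ∈ Finset.Icc 1 T, (g t (αhat t) - g t α) ≤
      R ^ 2 * Real.sqrt T / (2 * ρ) + ρ * G ^ 2 * (2 * Real.sqrt T - 1) / 2 := by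
  intro α hα
  have hmem : ∀ t, 1 ≤ t → αhat t ∈ 𝒜 := fun t ht =>
    Nat.le_induction hα1 (fun t ht _ => (hproj t ht).1) t ht
  refine sum_le_of_le_sqrt_stepsize hρ (sq_nonneg G) (fun t => sq_nonneg ‖αhat t - α‖)
    (fun t ht => pow_le_pow_left₀ (norm_nonneg _) (hdiam _ (hmem t ht) _ hα) 2) (fun t ht => ?_) hT
  have hη : 0 < ρ / √(t : ℝ) := div_pos hρ (Real.sqrt_pos.2 (by exact_mod_cast ht))
  calc g t (αhat t) - g t α
      ≤ (‖αhat t - α‖ ^ 2 - ‖αhat (t + 1) - α‖ ^ 2) / (2 * (ρ / √(t : ℝ)))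
          + ρ / √(t : ℝ) / 2 * ‖gradient (g t) (αhat t)‖ ^ 2 :=
        (hgc t).sub_le_of_projected_gradient_step h𝒜 (hmem t ht) hα (hgd t _) hη
          (hproj t ht).1 (by simpa only [hρt] using (hproj t ht).2)
    _ ≤ _ := by gcongr; exact hgG t _ (hmem t ht)

/-- Zinkevich's online gradient descent regret bound. -/
theorem zinkevich_ogd
    {n : ℕ} (𝒜 : Set (EuclideanSpace ℝ (Fin n))) (h𝒜c : IsClosed 𝒜) (h𝒜 : Convex ℝ 𝒜)
    (h𝒜ne : 𝒜.Nonempty)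
    (R G ρ : ℝ) (hR : 0 < R) (hG : 0 < G) (hρ : 0 < ρ)
    (hdiam : ∀ a ∈ 𝒜, ∀ b ∈ 𝒜, ‖a - b‖ ≤ R)
    (g : ℕ → EuclideanSpace ℝ (Fin n) → ℝ)
    (hgd : ∀ t, Differentiable ℝ (g t))
    (hgc : ∀ t, ConvexOn ℝ 𝒜 (g t))
    (hgG : ∀ t, ∀ a ∈ 𝒜, ‖gradient (g t) a‖ ≤ G)
    (ρt : ℕ → ℝ) (hρt : ∀ t : ℕ, ρt t = ρ / Real.sqrt t)
    (αhat : ℕ → EuclideanSpace ℝ (Fin n)) (hα1 : αhat 1 ∈ 𝒜)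
    -- αhat (t+1) is the Euclidean projection of the gradient step onto 𝒜
    (hproj : ∀ t : ℕ, 1 ≤ t → αhat (t + 1) ∈ 𝒜 ∧ ∀ a ∈ 𝒜,
      ‖αhat (t + 1) - (αhat t - ρt t • gradient (g t) (αhat t))‖ ≤
        ‖a - (αhat t - ρt t • gradient (g t) (αhat t))‖)
    (T : ℕ) (hT : 1 ≤ T) :
    ∀ α ∈ 𝒜, ∑ t ∈ Finset.Icc 1 T, (g t (αhat t) - g t α) ≤
      R ^ 2 * Real.sqrt T / (2 * ρ) + ρ * G ^ 2 * (2 * Real.sqrt T - 1) / 2 :=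
  zinkevich_ogd_general 𝒜 h𝒜 R G ρ hρ hdiam g hgd hgc hgG ρt hρt αhat hα1 hproj T hT
end
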